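/- For every integer d > 2, Σ_{ℓ=1}^{d−2} Σ_{i=1}^{d−2} O(d−ℓ−1, d−1, i, d−1) = O_{d−1}. -/

import Mathlib

open scoped BigOperators

open scoped BigOperators

/-- The largest `k` such that `C(k,t) ≤ a` (used in the greedy binomial expansion). -/
def maxBinomIdx (a t : ℕ) : ℕ :=
  ((Finset.range (a + t + 1)).filter fun k => Nat.choose k t ≤ a).sup id

/-- `a^{⟨t⟩}`, computed via the (unique, hence greedy) binomial expansion of `a` in base `t`:
if `a = C(k_t,t) + C(k_{t-1},t-1) + ⋯ + C(k_j,j)` with `k_t > ⋯ > k_j ≥ j ≥ 1`, then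
`a^{⟨t⟩} = C(k_t+1,t+1) + ⋯ + C(k_j+1,j+1)`; by convention `0^{⟨t⟩} = 0`. -/
def macaulay : ℕ → ℕ → ℕ
  | _, 0 => 0
  | a, t + 1 =>
    if a = 0 then 0
    else
      Nat.choose (maxBinomIdx a (t + 1) + 1) (t + 2) +
        macaulay (a - Nat.choose (maxBinomIdx a (t + 1)) (t + 1)) t

/-- A finite O-sequence: `h 0 = 1`, `h` vanishes after its first zero, `h` is eventually zero,
and `h (t+1) ≤ (h t)^{⟨t⟩}` for every `t ≥ 1`. -/
def IsFiniteOSeq (h : ℕ → ℕ) : Prop :=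
  h 0 = 1 ∧ (∀ t, h t = 0 → h (t + 1) = 0) ∧ (∃ N, ∀ t, N ≤ t → h t = 0) ∧
    ∀ t, 1 ≤ t → h (t + 1) ≤ macaulay (h t) t

/-- The multiplicity (length) `d = Σ_t h t` of a finite O-sequence. -/
noncomputable def mult (h : ℕ → ℕ) : ℕ := ∑ᶠ t, h t

/-- The socle degree `s = max {t : h t ≠ 0}` of a finite O-sequence. -/
noncomputable def socleDeg (h : ℕ → ℕ) : ℕ := sSup {t | h t ≠ 0}

/-- `countO p n k d = O(p,n,k,d)`: for `p ≥ 1`, `n ≥ 0`, `k ≥ 0`, `d ≥ 1`, the number of finite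
O-sequences `h` of multiplicity `d` and socle degree at most `n` with `h i = C(p-1+i,i)` for
`0 ≤ i ≤ k` and `h i < C(p-1+i,i)` for `i > k`; moreover `O(0,n,0,1) = 1` for `n ≥ 0`,
`O(0,n,k,d) = 0` for `k > 0` or `d > 1`, and `O(p,n,k,d) = 0` if `p < 0`, `n < 0`, `k < 0`
or `d ≤ 0`. -/
noncomputable def countO (p n k d : ℤ) : ℕ :=
  if 1 ≤ p ∧ 0 ≤ n ∧ 0 ≤ k ∧ 1 ≤ d then
    {h : ℕ → ℕ | IsFiniteOSeq h ∧ mult h = d.toNat ∧ socleDeg h ≤ n.toNat ∧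
        (∀ i : ℕ, (i : ℤ) ≤ k → h i = Nat.choose (p.toNat - 1 + i) i) ∧
        (∀ i : ℕ, k < (i : ℤ) → h i < Nat.choose (p.toNat - 1 + i) i)}.ncard
  else if p = 0 ∧ 0 ≤ n ∧ k = 0 ∧ d = 1 then 1
  else 0

/-- `O_d`: the number of finite O-sequences of multiplicity `d`. -/
noncomputable def countOd (d : ℕ) : ℕ :=
  {h : ℕ → ℕ | IsFiniteOSeq h ∧ mult h = d}.ncard

/-- `A_d`: the number of finite O-sequences of multiplicity `d` whose value at the socle degree
is at least `2`. -/
noncomputable def countAd (d : ℕ) : ℕ :=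
  {h : ℕ → ℕ | IsFiniteOSeq h ∧ mult h = d ∧ 2 ≤ h (socleDeg h)}.ncard

lemma macaulay_zero (t : ℕ) : macaulay 0 t = 0 := by
  cases t <;> simp [macaulay]

lemma choose_lower : ∀ t n : ℕ, 1 ≤ t → t ≤ n → n + 1 ≤ Nat.choose n t + t := by
  intro t
  induction t with
  | zero => omega
  | succ t ih =>
    intro n _ htn
    rcases Nat.eq_or_lt_of_le htn with h | h
    · subst h; simp [Nat.choose_self]
    · rcases t with _ | t'
      · simp [Nat.choose_one_right]
      · obtain ⟨n', rfl⟩ : ∃ n', n = n' + 1 := ⟨n - 1, by omega⟩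
        have h1 := ih n' (by omega) (by omega)
        have h2 : Nat.choose n' (t'+1) ≤ Nat.choose (n'+1) (t'+1+1) := by
          rw [Nat.choose_succ_succ]; omega
        omega

lemma mbi_mem (a t : ℕ) (ha : 1 ≤ a) (ht : 1 ≤ t) :
    maxBinomIdx a t ∈ (Finset.range (a + t + 1)).filter fun k => Nat.choose k t ≤ a := by
  have hne : ((Finset.range (a + t + 1)).filter fun k => Nat.choose k t ≤ a).Nonempty := by
    refine ⟨t, Finset.mem_filter.2 ⟨Finset.mem_range.2 (by omega), by simp [Nat.choose_self]; omega⟩⟩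
  obtain ⟨b, hb, hbe⟩ := Finset.exists_mem_eq_sup _ hne id
  rw [maxBinomIdx, hbe]; exact hb

lemma mbi_le (a t : ℕ) (ha : 1 ≤ a) (ht : 1 ≤ t) : Nat.choose (maxBinomIdx a t) t ≤ a :=
  (Finset.mem_filter.1 (mbi_mem a t ha ht)).2

lemma mbi_ge (a t : ℕ) (ha : 1 ≤ a) (ht : 1 ≤ t) : t ≤ maxBinomIdx a t := by
  have : t ∈ (Finset.range (a + t + 1)).filter fun k => Nat.choose k t ≤ a :=
    Finset.mem_filter.2 ⟨Finset.mem_range.2 (by omega), by simp [Nat.choose_self]; omega⟩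
  exact Finset.le_sup (f := id) this

lemma mbi_lt (a t : ℕ) (ha : 1 ≤ a) (ht : 1 ≤ t) : a < Nat.choose (maxBinomIdx a t + 1) t := by
  by_contra hcon
  push_neg at hcon
  set k := maxBinomIdx a t with hk
  have hkt : t ≤ k := mbi_ge a t ha ht
  have hr : k + 1 < a + t + 1 := by
    have := choose_lower t (k+1) ht (by omega)
    omega
  have : k + 1 ∈ (Finset.range (a + t + 1)).filter fun j => Nat.choose j t ≤ a :=
    Finset.mem_filter.2 ⟨Finset.mem_range.2 hr, hcon⟩
  have h5 := Finset.le_sup (f := id) this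
  simp only [id] at h5
  have hef : (Finset.filter (fun j => Nat.choose j t ≤ a) (Finset.range (a + t + 1))).sup id
      = maxBinomIdx a t := rfl
  rw [hef] at h5
  omega

lemma macaulay_lt : ∀ t a m : ℕ, 1 ≤ t → a < Nat.choose m t →
    macaulay a t < Nat.choose (m + 1) (t + 1) := by
  intro t
  induction t with
  | zero => omega
  | succ t ih =>
    intro a m _ ham
    show macaulay a (t+1) < Nat.choose (m+1) (t+2)
    have hmt : t + 1 ≤ m := by
      by_contra hc
      push_neg at hc
      rw [Nat.choose_eq_zero_of_lt hc] at ham; omega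
    rcases Nat.eq_zero_or_pos a with rfl | ha
    · rw [macaulay_zero]
      exact Nat.choose_pos (by omega)
    set k := maxBinomIdx a (t+1) with hkdef
    have hka : Nat.choose k (t+1) ≤ a := mbi_le _ _ ha (by omega)
    have hkt : t + 1 ≤ k := mbi_ge _ _ ha (by omega)
    have hlt : a < Nat.choose (k+1) (t+1) := mbi_lt _ _ ha (by omega)
    have hkm : k < m := by
      by_contra hc
      push_neg at hc
      exact absurd (le_trans (Nat.choose_le_choose _ hc) hka) (by omega)
    have hrec : macaulay a (t+1) =
        Nat.choose (k+1) (t+2) + macaulay (a - Nat.choose k (t+1)) t := by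
      rw [macaulay]
      simp [ha.ne', hkdef]
    rcases Nat.eq_zero_or_pos t with rfl | ht
    · -- t = 0
      have h0 : macaulay (a - Nat.choose k 1) 0 = 0 := rfl
      rw [hrec, h0]
      have h1 : Nat.choose (k+1) 2 ≤ Nat.choose m 2 := Nat.choose_le_choose _ (by omega)
      have h2 : Nat.choose (m+1) 2 = Nat.choose m 1 + Nat.choose m 2 := Nat.choose_succ_succ m 1
      have h3 : (1:ℕ) ≤ Nat.choose m 1 := by simp [Nat.choose_one_right]; omega
      show Nat.choose (k+1) 2 + 0 < Nat.choose (m+1) 2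
      omega
    · have hsub : a - Nat.choose k (t+1) < Nat.choose k t := by
        have : Nat.choose (k+1) (t+1) = Nat.choose k t + Nat.choose k (t+1) :=
          Nat.choose_succ_succ k t
        omega
      have hinner := ih (a - Nat.choose k (t+1)) k ht hsub
      have hstep : Nat.choose (k+1) (t+2) + macaulay (a - Nat.choose k (t+1)) t <
          Nat.choose (k+2) (t+2) := by
        have : Nat.choose (k+2) (t+2) = Nat.choose (k+1) (t+1) + Nat.choose (k+1) (t+2) :=
          Nat.choose_succ_succ (k+1) (t+1)
        omega
      have : Nat.choose (k+2) (t+2) ≤ Nat.choose (m+1) (t+2) := Nat.choose_le_choose _ (by omega)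
      omega

lemma mbi_choose (n t : ℕ) (ht : 1 ≤ t) (htn : t ≤ n) : maxBinomIdx (Nat.choose n t) t = n := by
  have hpos : 1 ≤ Nat.choose n t := Nat.choose_pos htn
  apply le_antisymm
  · -- every member ≤ n
    have := mbi_mem (Nat.choose n t) t hpos ht
    have hle := (Finset.mem_filter.1 this).2
    by_contra hc
    push_neg at hc
    have : Nat.choose (n+1) t ≤ Nat.choose (maxBinomIdx (Nat.choose n t) t) t :=
      Nat.choose_le_choose _ (by omega)
    have h2 : Nat.choose (n+1) t = Nat.choose n (t-1) + Nat.choose n t := by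
      rcases t with _ | t'
      · omega
      · simpa using Nat.choose_succ_succ n t'
    have : 1 ≤ Nat.choose n (t-1) := Nat.choose_pos (by omega)
    omega
  · have hn : n ∈ (Finset.range (Nat.choose n t + t + 1)).filter
        fun k => Nat.choose k t ≤ Nat.choose n t := by
      refine Finset.mem_filter.2 ⟨Finset.mem_range.2 ?_, le_refl _⟩
      have := choose_lower t n ht htn
      omega
    exact Finset.le_sup (f := id) hn

lemma macaulay_choose (n t : ℕ) (ht : 1 ≤ t) (htn : t ≤ n) :
    macaulay (Nat.choose n t) t = Nat.choose (n+1) (t+1) := by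
  obtain ⟨t', rfl⟩ : ∃ t', t = t' + 1 := ⟨t - 1, by omega⟩
  have hpos : 1 ≤ Nat.choose n (t'+1) := Nat.choose_pos htn
  rw [macaulay, if_neg (show ¬ Nat.choose n (t'+1) = 0 by omega),
    mbi_choose n (t'+1) ht htn, Nat.sub_self, macaulay_zero]
  rfl

lemma macaulay_mono : ∀ t a b : ℕ, a ≤ b → macaulay a t ≤ macaulay b t := by
  intro t
  induction t with
  | zero => intro a b _; rfl
  | succ t ih =>
    intro a b hab
    rcases Nat.eq_zero_or_pos a with rfl | ha
    · rw [macaulay_zero]; exact Nat.zero_le _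
    have hb : 1 ≤ b := le_trans ha hab
    set ka := maxBinomIdx a (t+1) with hka
    set kb := maxBinomIdx b (t+1) with hkb
    have hkab : ka ≤ kb := by
      have hmem := mbi_mem a (t+1) ha (by omega)
      have h1 := (Finset.mem_filter.1 hmem).1
      have h2 := (Finset.mem_filter.1 hmem).2
      have : ka ∈ (Finset.range (b + (t+1) + 1)).filter fun k => Nat.choose k (t+1) ≤ b :=
        Finset.mem_filter.2 ⟨Finset.mem_range.2 (by have := Finset.mem_range.1 h1; omega),
          le_trans h2 hab⟩
      exact Finset.le_sup (f := id) this
    have hrecb : macaulay b (t+1) =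
        Nat.choose (kb+1) (t+2) + macaulay (b - Nat.choose kb (t+1)) t := by
      rw [macaulay, if_neg (show ¬ b = 0 by omega)]
    have hreca : macaulay a (t+1) =
        Nat.choose (ka+1) (t+2) + macaulay (a - Nat.choose ka (t+1)) t := by
      rw [macaulay, if_neg (show ¬ a = 0 by omega)]
    rcases Nat.lt_or_ge ka kb with hlt | hge
    · have halt : a < Nat.choose (ka+1) (t+1) := mbi_lt _ _ ha (by omega)
      have : a < Nat.choose kb (t+1) :=
        lt_of_lt_of_le halt (Nat.choose_le_choose _ (by omega))
      have h6 := macaulay_lt (t+1) a kb (by omega) this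
      have h7 : Nat.choose (kb+1) (t+1+1) = Nat.choose (kb+1) (t+2) := rfl
      omega
    · have heq : ka = kb := le_antisymm hkab hge
      rw [hreca, hrecb, heq]
      have := ih (a - Nat.choose kb (t+1)) (b - Nat.choose kb (t+1)) (by omega)
      omega

section OSeqFacts

variable {h : ℕ → ℕ} {m : ℕ}

lemma prop_zero (hh : IsFiniteOSeq h) : ∀ i j : ℕ, i ≤ j → h i = 0 → h j = 0 := by
  intro i j hij hi
  induction j, hij using Nat.le_induction with
  | base => exact hi
  | succ j hij ih => exact hh.2.1 j ih

lemma sum_range_eq_mult (hh : IsFiniteOSeq h) {M : ℕ} (hM : ∀ t, M ≤ t → h t = 0) :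
    ∑ t ∈ Finset.range M, h t = mult h := by
  rw [mult]
  refine (finsum_eq_sum_of_support_subset h ?_).symm
  intro x hx
  simp only [Function.mem_support] at hx
  simp only [Finset.coe_range, Set.mem_Iio]
  by_contra hc
  exact hx (hM x (by omega))

lemma zero_of_ge (hh : IsFiniteOSeq h) (hm : mult h = m) : ∀ t, m ≤ t → h t = 0 := by
  intro t ht
  by_contra hne
  obtain ⟨N, hN⟩ := hh.2.2.1
  set M := max N (t + 1) with hMdef
  have hM : ∀ s, M ≤ s → h s = 0 := fun s hs => hN s (by omega)
  have hsum : ∑ s ∈ Finset.range M, h s = m := by rw [sum_range_eq_mult hh hM, hm]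
  have hsub : Finset.range (t+1) ⊆ Finset.range M := Finset.range_subset_range.2 (by omega)
  have hall : ∀ j ∈ Finset.range (t+1), 1 ≤ h j := by
    intro j hj
    rcases Nat.eq_zero_or_pos (h j) with h0 | h1
    · exact absurd (prop_zero hh j t (by simpa using Finset.mem_range.1 hj |> Nat.lt_succ_iff.1) h0) hne
    · exact h1
  have h1 : t + 1 ≤ ∑ j ∈ Finset.range (t+1), h j := by
    calc t + 1 = ∑ _j ∈ Finset.range (t+1), 1 := by simp
    _ ≤ ∑ j ∈ Finset.range (t+1), h j := Finset.sum_le_sum hall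
  have h2 : ∑ j ∈ Finset.range (t+1), h j ≤ ∑ s ∈ Finset.range M, h s :=
    Finset.sum_le_sum_of_subset hsub
  omega

lemma sum_range_m (hh : IsFiniteOSeq h) (hm : mult h = m) :
    ∑ t ∈ Finset.range m, h t = m := by
  rw [sum_range_eq_mult hh (zero_of_ge hh hm), hm]

lemma val_le (hh : IsFiniteOSeq h) (hm : mult h = m) : ∀ t, h t ≤ m := by
  intro t
  rcases Nat.lt_or_ge t m with hlt | hge
  · have := Finset.single_le_sum (f := h) (fun i _ => Nat.zero_le _) (Finset.mem_range.2 hlt)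
    rw [sum_range_m hh hm] at this
    exact this
  · rw [zero_of_ge hh hm t hge]; exact Nat.zero_le _

lemma socle_le (hh : IsFiniteOSeq h) (hm : mult h = m) (hm1 : 1 ≤ m) :
    socleDeg h ≤ m - 1 := by
  rw [socleDeg]
  apply csSup_le ⟨0, by simp [hh.1]⟩
  intro x hx
  have : x < m := by
    by_contra hc
    exact hx (zero_of_ge hh hm x (by omega))
  omega

lemma h1_pos (hh : IsFiniteOSeq h) (hm : mult h = m) (hm2 : 2 ≤ m) : 1 ≤ h 1 := by
  by_contra hc
  push_neg at hc
  have h10 : h 1 = 0 := by omega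
  have : ∀ t, 1 ≤ t → h t = 0 := fun t ht => prop_zero hh 1 t ht h10
  have := sum_range_eq_mult hh this
  simp [hh.1, hm] at this
  omega

lemma h1_le (hh : IsFiniteOSeq h) (hm : mult h = m) (hm2 : 2 ≤ m) : h 1 ≤ m - 1 := by
  have hsub : Finset.range 2 ⊆ Finset.range m := Finset.range_subset_range.2 hm2
  have := Finset.sum_le_sum_of_subset (f := h) hsub
  rw [sum_range_m hh hm] at this
  have h2 : ∑ t ∈ Finset.range 2, h t = h 0 + h 1 := by
    rw [Finset.sum_range_succ, Finset.sum_range_one]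
  rw [hh.1] at h2
  omega

lemma upper (hh : IsFiniteOSeq h) (hp : 1 ≤ h 1) :
    ∀ i, h i ≤ Nat.choose (h 1 - 1 + i) i := by
  intro i
  induction i with
  | zero => simp [hh.1]
  | succ i ih =>
    rcases Nat.eq_zero_or_pos i with rfl | hi
    · have : h 1 - 1 + 1 = h 1 := by omega
      rw [this, Nat.choose_one_right]
    · calc h (i + 1) ≤ macaulay (h i) i := hh.2.2.2 i hi
        _ ≤ macaulay (Nat.choose (h 1 - 1 + i) i) i := macaulay_mono i _ _ ih
        _ = Nat.choose (h 1 - 1 + i + 1) (i + 1) :=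
            macaulay_choose (h 1 - 1 + i) i hi (by omega)
        _ = Nat.choose (h 1 - 1 + (i + 1)) (i + 1) := by ring_nf

lemma strict_prop (hh : IsFiniteOSeq h) (hp : 1 ≤ h 1) {i : ℕ} (hi : 1 ≤ i)
    (hlt : h i < Nat.choose (h 1 - 1 + i) i) :
    h (i + 1) < Nat.choose (h 1 - 1 + (i + 1)) (i + 1) := by
  have h1 : h (i + 1) ≤ macaulay (h i) i := hh.2.2.2 i hi
  have h2 := macaulay_lt i (h i) (h 1 - 1 + i) hi hlt
  have h3 : h 1 - 1 + i + 1 = h 1 - 1 + (i + 1) := by omega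
  rw [h3] at h2
  omega

lemma exists_k (hh : IsFiniteOSeq h) (hm : mult h = m) (hm2 : 2 ≤ m) :
    ∃ k, 1 ≤ k ∧ k ≤ m - 1 ∧
      (∀ i ≤ k, h i = Nat.choose (h 1 - 1 + i) i) ∧
      (∀ i, k < i → h i < Nat.choose (h 1 - 1 + i) i) := by
  classical
  have hp : 1 ≤ h 1 := h1_pos hh hm hm2
  set p := h 1 with hpdef
  set F := (Finset.range m).filter (fun i => h i = Nat.choose (p - 1 + i) i) with hF
  have h1F : 1 ∈ F := by
    refine Finset.mem_filter.2 ⟨Finset.mem_range.2 (by omega), ?_⟩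
    have : p - 1 + 1 = p := by omega
    rw [this, Nat.choose_one_right]
  set k := F.sup id with hk
  have hk1 : 1 ≤ k := Finset.le_sup (f := id) h1F
  have hkmem : k ∈ F := by
    obtain ⟨b, hb, hbe⟩ := Finset.exists_mem_eq_sup F ⟨1, h1F⟩ id
    rw [hk, hbe]; exact hb
  have hkm : k ≤ m - 1 := by
    have := Finset.mem_range.1 (Finset.mem_filter.1 hkmem).1
    omega
  have hkeq : h k = Nat.choose (p - 1 + k) k := (Finset.mem_filter.1 hkmem).2
  refine ⟨k, hk1, hkm, ?_, ?_⟩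
  · -- all i ≤ k equality
    intro i hik
    by_contra hne
    have hi1 : 1 ≤ i := by
      rcases Nat.eq_zero_or_pos i with rfl | hi
      · exact absurd (by simp [hh.1] : h 0 = Nat.choose (p - 1 + 0) 0) hne
      · exact hi
    have hlt : h i < Nat.choose (p - 1 + i) i :=
      lt_of_le_of_ne (upper hh hp i) hne
    have hstep : ∀ j, i ≤ j → h j < Nat.choose (p - 1 + j) j := by
      intro j hij
      induction j, hij using Nat.le_induction with
      | base => exact hlt
      | succ j hij ih => exact strict_prop hh hp (by omega) ih
    exact absurd hkeq (Nat.ne_of_lt (hstep k hik))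
  · intro i hki
    rcases Nat.lt_or_ge i m with him | him
    · refine lt_of_le_of_ne (upper hh hp i) ?_
      intro heq
      have : i ∈ F := Finset.mem_filter.2 ⟨Finset.mem_range.2 him, heq⟩
      have := Finset.le_sup (f := id) this
      simp only [id] at this
      omega
    · rw [zero_of_ge hh hm i him]
      exact Nat.choose_pos (by omega)

end OSeqFacts

def Tset (m p k : ℕ) : Set (ℕ → ℕ) :=
  {h | IsFiniteOSeq h ∧ mult h = m ∧ (∀ i ≤ k, h i = Nat.choose (p - 1 + i) i) ∧
    ∀ i, k < i → h i < Nat.choose (p - 1 + i) i}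

lemma S_finite (m : ℕ) : {h : ℕ → ℕ | IsFiniteOSeq h ∧ mult h = m}.Finite := by
  classical
  set S := {h : ℕ → ℕ | IsFiniteOSeq h ∧ mult h = m} with hS
  set Φ : (ℕ → ℕ) → (Fin (m + 1) → ℕ) := fun h i => h i with hΦ
  have himg : (Φ '' S).Finite := by
    apply Set.Finite.subset (Set.Finite.pi (fun _ : Fin (m+1) => Set.finite_Iic m))
    rintro g ⟨h, hhS, rfl⟩
    intro i _
    exact val_le hhS.1 hhS.2 i
  have hinj : Set.InjOn Φ S := by
    intro h1 hS1 h2 hS2 heq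
    funext t
    rcases Nat.lt_or_ge t (m + 1) with ht | ht
    · exact congrFun heq ⟨t, ht⟩
    · rw [zero_of_ge hS1.1 hS1.2 t (by omega), zero_of_ge hS2.1 hS2.2 t (by omega)]
  exact Set.Finite.of_finite_image himg hinj

lemma Tset_subset (m p k : ℕ) :
    Tset m p k ⊆ {h : ℕ → ℕ | IsFiniteOSeq h ∧ mult h = m} :=
  fun _ hh => ⟨hh.1, hh.2.1⟩

lemma mem_Tset_h1 {m p k : ℕ} (hp : 1 ≤ p) (hk : 1 ≤ k) {h : ℕ → ℕ}
    (hh : h ∈ Tset m p k) : h 1 = p := by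
  have := hh.2.2.1 1 hk
  rwa [show p - 1 + 1 = p by omega, Nat.choose_one_right] at this

lemma Tset_disj {m : ℕ} {p k p' k' : ℕ} (hp : 1 ≤ p) (hk : 1 ≤ k) (hp' : 1 ≤ p')
    (hk' : 1 ≤ k') (hne : (p, k) ≠ (p', k')) {h : ℕ → ℕ}
    (h1 : h ∈ Tset m p k) (h2 : h ∈ Tset m p' k') : False := by
  have hpp : p = p' := by rw [← mem_Tset_h1 hp hk h1, mem_Tset_h1 hp' hk' h2]
  subst hpp
  have hkk : k ≠ k' := fun hc => hne (by rw [hc])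
  rcases Nat.lt_or_ge k k' with hlt | hge
  · exact absurd (h2.2.2.1 k' le_rfl) (Nat.ne_of_lt (h1.2.2.2 k' hlt))
  · have hlt : k' < k := by omega
    exact absurd (h1.2.2.1 k le_rfl) (Nat.ne_of_lt (h2.2.2.2 k hlt))

lemma key_count (m : ℕ) (hm : 2 ≤ m) :
    ∑ p ∈ Finset.Icc 1 (m-1), ∑ k ∈ Finset.Icc 1 (m-1), (Tset m p k).ncard
      = countOd m := by
  classical
  have hSfin := S_finite m
  have hTfin : ∀ p k : ℕ, (Tset m p k).Finite := fun p k => hSfin.subset (Tset_subset m p k)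
  rw [countOd, Set.ncard_eq_toFinset_card _ hSfin]
  have hsum : ∑ p ∈ Finset.Icc 1 (m-1), ∑ k ∈ Finset.Icc 1 (m-1), (Tset m p k).ncard
      = ∑ pk ∈ (Finset.Icc 1 (m-1)) ×ˢ (Finset.Icc 1 (m-1)),
          ((hTfin pk.1 pk.2).toFinset).card := by
    rw [Finset.sum_product]
    exact Finset.sum_congr rfl fun p _ => Finset.sum_congr rfl fun k _ =>
      Set.ncard_eq_toFinset_card _ (hTfin p k)
  rw [hsum]
  rw [← Finset.card_biUnion]
  · congr 1
    ext h
    simp only [Finset.mem_biUnion, Set.Finite.mem_toFinset, Finset.mem_product,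
      Finset.mem_Icc]
    constructor
    · rintro ⟨⟨p, k⟩, _, hT⟩
      exact Tset_subset m p k hT
    · intro hS
      obtain ⟨k, hk1, hkm, heq, hlt⟩ := exists_k hS.1 hS.2 hm
      refine ⟨(h 1, k), ?_, hS.1, hS.2, heq, hlt⟩
      have := h1_pos hS.1 hS.2 hm
      have := h1_le hS.1 hS.2 hm
      simp only [Finset.mem_product, Finset.mem_Icc]
      omega
  · rintro ⟨p, k⟩ hpk ⟨p', k'⟩ hpk' hne
    simp only [Finset.mem_coe, Finset.mem_product, Finset.mem_Icc] at hpk hpk'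
    rw [Function.onFun, Finset.disjoint_left]
    intro h hT hT'
    simp only [Set.Finite.mem_toFinset] at hT hT'
    exact Tset_disj (by omega) (by omega) (by omega) (by omega) hne hT hT'

lemma countO_eq (d p k : ℕ) (hd : 3 ≤ d) (hp : 1 ≤ p) (hk : 1 ≤ k) :
    countO (p : ℤ) ((d : ℤ) - 1) (k : ℤ) ((d : ℤ) - 1) = (Tset (d - 1) p k).ncard := by
  rw [countO, if_pos (by constructor <;> [exact_mod_cast hp; omega])]
  congr 1
  ext h
  simp only [Set.mem_setOf_eq, Tset]
  have htn : ((d : ℤ) - 1).toNat = d - 1 := by omega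
  have hptn : ((p : ℤ)).toNat = p := Int.toNat_natCast p
  rw [htn, hptn]
  constructor
  · rintro ⟨hh, hm, _, heq, hlt⟩
    exact ⟨hh, hm, fun i hi => heq i (by exact_mod_cast hi),
      fun i hi => hlt i (by exact_mod_cast hi)⟩
  · rintro ⟨hh, hm, heq, hlt⟩
    refine ⟨hh, hm, ?_, fun i hi => heq i (by exact_mod_cast hi),
      fun i hi => hlt i (by exact_mod_cast hi)⟩
    have := socle_le hh hm (by omega)
    omega

lemma sum_icc_int (n : ℕ) (f : ℤ → ℕ) :
    ∑ x ∈ Finset.Icc (1 : ℤ) (n : ℤ), f x = ∑ x ∈ Finset.Icc 1 n, f ((x : ℕ) : ℤ) := by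
  refine (Finset.sum_nbij' (fun x : ℤ => x.toNat) (fun x : ℕ => (x : ℤ)) ?_ ?_ ?_ ?_ ?_).symm.symm
  · intro a ha
    simp only [Finset.mem_Icc] at ha ⊢
    omega
  · intro a ha
    simp only [Finset.mem_Icc] at ha ⊢
    omega
  · intro a ha
    simp only [Finset.mem_Icc] at ha
    show ((a.toNat : ℕ) : ℤ) = a
    omega
  · intro a ha
    show ((((a : ℤ)).toNat : ℕ)) = a
    omega
  · intro a ha
    simp only [Finset.mem_Icc] at ha
    show f a = f ((a.toNat : ℕ) : ℤ)
    congr 1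
    omega

/-- For every integer `d > 2`,
`Σ_{ℓ=1}^{d−2} Σ_{i=1}^{d−2} O(d−ℓ−1, d−1, i, d−1) = O_{d−1}`. -/
theorem stmt12 (d : ℕ) (hd : 2 < d) :
    (∑ ℓ ∈ Finset.Icc (1 : ℤ) ((d : ℤ) - 2), ∑ i ∈ Finset.Icc (1 : ℤ) ((d : ℤ) - 2),
        countO ((d : ℤ) - ℓ - 1) ((d : ℤ) - 1) i ((d : ℤ) - 1)) = countOd (d - 1) := by
  have h2 : ((d : ℤ) - 2) = ((d - 2 : ℕ) : ℤ) := by omega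
  rw [h2, sum_icc_int (d - 2) _]
  have step1 : ∀ ℓ ∈ Finset.Icc 1 (d - 2),
      (∑ i ∈ Finset.Icc (1 : ℤ) ((d - 2 : ℕ) : ℤ),
          countO ((d : ℤ) - ((ℓ : ℕ) : ℤ) - 1) ((d : ℤ) - 1) i ((d : ℤ) - 1))
        = ∑ k ∈ Finset.Icc 1 (d - 2), (Tset (d - 1) (d - 1 - ℓ) k).ncard := by
    intro ℓ hℓ
    simp only [Finset.mem_Icc] at hℓ
    rw [sum_icc_int (d - 2) _]
    refine Finset.sum_congr rfl fun k hk => ?_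
    simp only [Finset.mem_Icc] at hk
    have hcast : (d : ℤ) - ((ℓ : ℕ) : ℤ) - 1 = ((d - 1 - ℓ : ℕ) : ℤ) := by omega
    rw [hcast]
    exact countO_eq d (d - 1 - ℓ) k (by omega) (by omega) (by omega)
  rw [Finset.sum_congr rfl step1]
  have step2 : (∑ ℓ ∈ Finset.Icc 1 (d - 2),
      ∑ k ∈ Finset.Icc 1 (d - 2), (Tset (d - 1) (d - 1 - ℓ) k).ncard)
      = ∑ p ∈ Finset.Icc 1 (d - 2), ∑ k ∈ Finset.Icc 1 (d - 2), (Tset (d - 1) p k).ncard := by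
    refine Finset.sum_nbij' (fun ℓ => d - 1 - ℓ) (fun p => d - 1 - p) ?_ ?_ ?_ ?_ ?_
    all_goals intro a ha; simp only [Finset.mem_Icc] at ha ⊢ <;> try omega
  rw [step2]
  have hm1 : d - 2 = (d - 1) - 1 := by omega
  rw [hm1]
  exact key_count (d - 1) (by omega)
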